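/- As formal power series in q: Σ_{i,j>0} q^{i+j}/((1-q^i)(1-q^j)(1-q^{i+j})) = Z(3) - Σ_{n>0} n·q^n/(1-q^n)^2. -/

import Mathlib

open PowerSeries

/-- Sum over positive integers, coefficientwise. -/
noncomputable def psum (f : ℕ → ℚ⟦X⟧) : ℚ⟦X⟧ :=
  PowerSeries.mk fun m => ∑ n ∈ Finset.Icc 1 m, PowerSeries.coeff m (f n)

/-- Double sum over pairs of positive integers, coefficientwise. -/
noncomputable def psum2 (f : ℕ → ℕ → ℚ⟦X⟧) : ℚ⟦X⟧ :=
  PowerSeries.mk fun m => ∑ p ∈ Finset.Icc 1 m ×ˢ Finset.Icc 1 m,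
    PowerSeries.coeff m (f p.1 p.2)

noncomputable def Z3 : ℚ⟦X⟧ := psum fun n => X ^ n * (1 + X ^ n) * ((1 - X ^ n)⁻¹) ^ 3

open Finset

/-!
Compare the coefficients of `X ^ m`. Modulo `X ^ (m + 1)` the geometric series may be truncated,
and `X^(i+j) / ((1 - X^i)(1 - X^j)(1 - X^(i+j))) = ∑_{r ≥ 1} ∑_{t, s ≥ r} X^(t i + s j)`, so the
coefficient on the left is `∑ min(t, s)` over the positive solutions of `t i + s j = m`. On the
right, `X (1 + X) / (1 - X)³ = ∑ k² X^k` and `X / (1 - X)² = ∑ k X^k` give `∑_{d e = m} (e² - d e)`.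

The Euclid step `(i, j, t, s) ↦ (i - j, j, t, t + s)` maps the solutions with `j < i` bijectively
onto those with `t < s`. Together with the symmetries `(i, j, t, s) ↦ (j, i, s, t)` and
`(i, j, t, s) ↦ (t, s, i, j)` of the equation it gives `∑ min(t, s) = ∑_{i = j} (t + s - i)`, and on
the diagonal `i = j` the pair `(i, t + s)` runs over the divisor pairs `(d, e)` of `m`, each one
`e - 1` times.
-/

theorem Nat.succ_choose_two_add_choose_two (n : ℕ) : (n + 1).choose 2 + n.choose 2 = n ^ 2 := by
  have pascal (k : ℕ) : (k + 1).choose 2 = k + k.choose 2 := by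
    rw [Nat.choose_succ_succ', Nat.choose_one_right]
  induction n with
  | zero => rfl
  | succ n ih =>
    rw [pascal (n + 1), pascal n] at *
    linarith

section

variable {R : Type*} [CommRing R]

theorem X_mul_mk_one_sq : X * (PowerSeries.mk 1 : R⟦X⟧) ^ 2 = PowerSeries.mk fun k => (k : R) := by
  rw [mk_one_pow_eq_mk_choose_add]
  ext (_ | k) <;> simp [coeff_succ_X_mul, add_comm]

theorem X_mul_one_add_X_mul_mk_one_pow_three :
    X * (1 + X) * (PowerSeries.mk 1 : R⟦X⟧) ^ 3 = PowerSeries.mk fun k => (k : R) ^ 2 := by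
  rw [mk_one_pow_eq_mk_choose_add, mul_assoc, add_mul, one_mul]
  ext (_ | _ | k)
  · simp
  · simp [coeff_succ_X_mul]
  · simp only [coeff_succ_X_mul, map_add, coeff_mk]
    norm_cast
    rw [add_comm 2, add_comm 2, Nat.succ_choose_two_add_choose_two]

theorem coeff_eq_coeff_of_X_pow_dvd_sub {m : ℕ} {f g : R⟦X⟧} (h : X ^ (m + 1) ∣ f - g) :
    coeff m f = coeff m g := by
  rw [X_pow_dvd_iff] at h
  simpa [sub_eq_zero] using h m m.lt_succ_self

end

section

variable {K : Type*} [Field K]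

theorem inv_one_sub_X_pow_eq_expand {n : ℕ} (hn : n ≠ 0) :
    (1 - X ^ n : K⟦X⟧)⁻¹ = expand n hn (PowerSeries.mk 1) := by
  rw [inv_eq_iff_mul_eq_one (by simp [hn])]
  have : (1 - X ^ n : K⟦X⟧) = expand n hn (1 - X) := by simp
  rw [this, ← map_mul, mk_one_mul_one_sub_eq_one, map_one]

theorem coeff_X_pow_mul_one_add_X_pow_mul_inv_pow_three {n : ℕ} (hn : n ≠ 0) (m : ℕ) :
    coeff m (X ^ n * (1 + X ^ n) * ((1 - X ^ n)⁻¹) ^ 3 : K⟦X⟧) =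
      if n ∣ m then ((m / n : ℕ) : K) ^ 2 else 0 := by
  rw [inv_one_sub_X_pow_eq_expand hn, ← expand_X n hn, ← map_one (expand n hn), ← map_add,
    ← map_pow, ← map_mul, ← map_mul, X_mul_one_add_X_mul_mk_one_pow_three, coeff_expand]
  simp

theorem coeff_X_pow_mul_inv_sq {n : ℕ} (hn : n ≠ 0) (m : ℕ) :
    coeff m (X ^ n * ((1 - X ^ n)⁻¹) ^ 2 : K⟦X⟧) = if n ∣ m then ((m / n : ℕ) : K) else 0 := by
  rw [inv_one_sub_X_pow_eq_expand hn, ← expand_X n hn, ← map_pow, ← map_mul, X_mul_mk_one_sq,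
    coeff_expand]
  simp

theorem X_pow_dvd_X_pow_mul_inv_one_sub_X_pow_sub_sum {n r N : ℕ} (hn : n ≠ 0) (hr : r ≤ N) :
    X ^ N ∣ X ^ (r * n) * (1 - X ^ n : K⟦X⟧)⁻¹ - ∑ t ∈ Ico r N, X ^ (t * n) := by
  have hinv : (1 - X ^ n : K⟦X⟧)⁻¹ * (1 - X ^ n) = 1 := PowerSeries.inv_mul_cancel _ (by simp [hn])
  have hsum : ∑ t ∈ Ico r N, (X : K⟦X⟧) ^ (t * n) =
      X ^ (r * n) * ∑ u ∈ range (N - r), (X ^ n) ^ u := by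
    rw [sum_Ico_eq_sum_range, mul_sum]
    exact sum_congr rfl fun u _ => by ring
  have htail : X ^ (r * n) * (1 - X ^ n : K⟦X⟧)⁻¹ - ∑ t ∈ Ico r N, X ^ (t * n) =
      X ^ (N * n) * (1 - X ^ n)⁻¹ := by
    rw [hsum]
    calc _ = X ^ (r * n) * (1 - X ^ n : K⟦X⟧)⁻¹ *
          (1 - (1 - X ^ n) * ∑ u ∈ range (N - r), (X ^ n) ^ u) := by
            linear_combination (X ^ (r * n) * ∑ u ∈ range (N - r), (X ^ n) ^ u) * hinv
      _ = X ^ (N * n) * (1 - X ^ n)⁻¹ := by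
        rw [mul_neg_geom_sum, sub_sub_cancel, ← pow_mul, mul_right_comm, ← pow_add,
          mul_comm n, ← add_mul, Nat.add_sub_cancel' hr]
  rw [htail]
  exact (pow_dvd_pow X (Nat.le_mul_of_pos_right N (Nat.pos_of_ne_zero hn))).mul_right _

theorem coeff_X_pow_add_mul_inv_mul_inv_mul_inv {i j : ℕ} (hi : i ≠ 0) (hj : j ≠ 0) (m : ℕ) :
    coeff m (X ^ (i + j) * (1 - X ^ i)⁻¹ * (1 - X ^ j)⁻¹ * (1 - X ^ (i + j))⁻¹ : K⟦X⟧) =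
      ∑ p ∈ Icc 1 m ×ˢ Icc 1 m, if p.1 * i + p.2 * j = m then ((min p.1 p.2 : ℕ) : K) else 0 := by
  set π := Ideal.Quotient.mk (Ideal.span {(X : K⟦X⟧) ^ (m + 1)})
  have truncate {n r : ℕ} (hn : n ≠ 0) (hr : r ≤ m + 1) :
      π (X ^ (r * n) * (1 - X ^ n)⁻¹) = π (∑ t ∈ Icc r m, X ^ (t * n)) := by
    rw [Ideal.Quotient.eq, Ideal.mem_span_singleton, ← Ico_add_one_right_eq_Icc]
    exact X_pow_dvd_X_pow_mul_inv_one_sub_X_pow_sub_sum hn hr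
  have hmod : π (X ^ (i + j) * (1 - X ^ i)⁻¹ * (1 - X ^ j)⁻¹ * (1 - X ^ (i + j))⁻¹) =
      π (∑ r ∈ Icc 1 m, ∑ p ∈ Icc r m ×ˢ Icc r m, X ^ (p.1 * i + p.2 * j)) := by
    calc _ = π (X ^ (1 * (i + j)) * (1 - X ^ (i + j))⁻¹) * π ((1 - X ^ i)⁻¹ * (1 - X ^ j)⁻¹) := by
          rw [← map_mul]; congr 1; ring
      _ = ∑ r ∈ Icc 1 m, π (X ^ (r * i) * (1 - X ^ i)⁻¹) * π (X ^ (r * j) * (1 - X ^ j)⁻¹) := by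
          rw [truncate (by omega) (by omega), map_sum, sum_mul]
          refine sum_congr rfl fun r _ => ?_
          simp only [← map_mul]; congr 1; ring
      _ = _ := by
          rw [map_sum]
          refine sum_congr rfl fun r hr => ?_
          rw [mem_Icc] at hr
          rw [truncate hi (by omega), truncate hj (by omega), ← map_mul, sum_mul_sum, sum_product]
          simp only [pow_add]
  rw [coeff_eq_coeff_of_X_pow_dvd_sub (Ideal.mem_span_singleton.mp (Ideal.Quotient.eq.mp hmod))]
  simp only [map_sum, coeff_X_pow]
  rw [sum_comm' (t' := Icc 1 m ×ˢ Icc 1 m) (s' := fun p => Icc 1 (min p.1 p.2))]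
  · refine sum_congr rfl fun p _ => ?_
    simp [eq_comm]
  · intro r p
    simp only [mem_Icc, mem_product, le_min_iff]
    omega

end

theorem Finset.sum_comp_of_involutive {α M : Type*} [AddCommMonoid M] {s : Finset α}
    {σ : α → α} (hσ : Function.Involutive σ) (hs : ∀ x ∈ s, σ x ∈ s) (f : α → M) :
    ∑ x ∈ s, f (σ x) = ∑ x ∈ s, f x :=
  sum_nbij' σ σ hs hs (fun x _ => hσ x) (fun x _ => hσ x) fun _ _ => rfl

def posSolutions (m : ℕ) : Finset ((ℕ × ℕ) × (ℕ × ℕ)) :=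
  {x ∈ (Icc 1 m ×ˢ Icc 1 m) ×ˢ (Icc 1 m ×ˢ Icc 1 m) | x.2.1 * x.1.1 + x.2.2 * x.1.2 = m}

theorem mem_posSolutions {m i j t s : ℕ} :
    ((i, j), (t, s)) ∈ posSolutions m ↔ 0 < i ∧ 0 < j ∧ 0 < t ∧ 0 < s ∧ t * i + s * j = m := by
  simp only [posSolutions, mem_filter, mem_product, mem_Icc]
  constructor
  · rintro ⟨⟨⟨⟨hi, -⟩, hj, -⟩, ⟨ht, -⟩, hs, -⟩, h⟩
    exact ⟨hi, hj, ht, hs, h⟩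
  · rintro ⟨hi, hj, ht, hs, rfl⟩
    have := Nat.le_mul_of_pos_left i ht
    have := Nat.le_mul_of_pos_left j hs
    have := Nat.le_mul_of_pos_right t hi
    have := Nat.le_mul_of_pos_right s hj
    omega

section posSolutions

variable {M : Type*} [AddCommMonoid M] (m : ℕ)

theorem sum_filter_posSolutions_flip (p : (ℕ × ℕ) × (ℕ × ℕ) → Prop) [DecidablePred p]
    (f : (ℕ × ℕ) × (ℕ × ℕ) → M) :
    ∑ x ∈ posSolutions m with p (x.1.swap, x.2.swap), f (x.1.swap, x.2.swap) =
      ∑ x ∈ posSolutions m with p x, f x := by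
  simp only [sum_filter]
  refine sum_comp_of_involutive (fun _ => rfl) ?_ fun x => if p x then f x else 0
  rintro ⟨⟨i, j⟩, t, s⟩ hx
  simp only [Prod.swap_prod_mk, mem_posSolutions] at hx ⊢
  omega

theorem sum_filter_posSolutions_swap (p : (ℕ × ℕ) × (ℕ × ℕ) → Prop) [DecidablePred p]
    (f : (ℕ × ℕ) × (ℕ × ℕ) → M) :
    ∑ x ∈ posSolutions m with p x.swap, f x.swap = ∑ x ∈ posSolutions m with p x, f x := by
  simp only [sum_filter]
  refine sum_comp_of_involutive Prod.swap_swap ?_ fun x => if p x then f x else 0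
  rintro ⟨⟨i, j⟩, t, s⟩ hx
  simp only [Prod.swap_prod_mk, mem_posSolutions] at hx ⊢
  obtain ⟨hi, hj, ht, hs, rfl⟩ := hx
  exact ⟨ht, hs, hi, hj, by ring⟩

theorem sum_posSolutions_euclid (f : (ℕ × ℕ) × (ℕ × ℕ) → M) :
    ∑ x ∈ posSolutions m with x.1.2 < x.1.1, f ((x.1.1 - x.1.2, x.1.2), (x.2.1, x.2.1 + x.2.2)) =
      ∑ x ∈ posSolutions m with x.2.1 < x.2.2, f x := by
  refine sum_nbij' (fun x => ((x.1.1 - x.1.2, x.1.2), (x.2.1, x.2.1 + x.2.2)))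
    (fun x => ((x.1.1 + x.1.2, x.1.2), (x.2.1, x.2.2 - x.2.1))) ?_ ?_ ?_ ?_ (fun _ _ => rfl) <;>
    rintro ⟨⟨i, j⟩, t, s⟩ hx <;> simp only [mem_filter, mem_posSolutions] at hx ⊢
  · obtain ⟨⟨hi, hj, ht, hs, rfl⟩, hji⟩ := hx
    obtain ⟨d, rfl⟩ := Nat.exists_eq_add_of_lt hji
    refine ⟨⟨by omega, hj, ht, by omega, ?_⟩, by omega⟩
    rw [show j + d + 1 - j = d + 1 by omega]
    ring
  · obtain ⟨⟨hi, hj, ht, hs, rfl⟩, hts⟩ := hx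
    obtain ⟨d, rfl⟩ := Nat.exists_eq_add_of_lt hts
    refine ⟨⟨by omega, hj, ht, by omega, ?_⟩, by omega⟩
    rw [show t + d + 1 - t = d + 1 by omega]
    ring
  all_goals simp only [Prod.mk.injEq, and_true, true_and]; omega

theorem sum_posSolutions_diag (w : ℕ → ℕ → M) :
    ∑ x ∈ posSolutions m with x.1.1 = x.1.2, w x.1.1 (x.2.1 + x.2.2) =
      ∑ p ∈ m.divisorsAntidiagonal, (p.2 - 1) • w p.1 p.2 := by
  have hfib : ∀ p ∈ m.divisorsAntidiagonal,
      (p.2 - 1) • w p.1 p.2 = ∑ _t ∈ Ioo 0 p.2, w p.1 p.2 := fun p _ => by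
    rw [sum_const, Nat.card_Ioo, Nat.sub_zero]
  rw [sum_congr rfl hfib, sum_sigma']
  refine sum_nbij' (fun x => ⟨(x.1.1, x.2.1 + x.2.2), x.2.1⟩)
    (fun y => ((y.1.1, y.1.1), (y.2, y.1.2 - y.2))) ?_ ?_ ?_ ?_ fun _ _ => rfl
  · rintro ⟨⟨i, j⟩, t, s⟩ hx
    simp only [mem_filter, mem_posSolutions] at hx
    obtain ⟨⟨hi, -, ht, hs, rfl⟩, rfl⟩ := hx
    simp only [mem_sigma, Nat.mem_divisorsAntidiagonal, mem_Ioo]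
    exact ⟨⟨by ring, by positivity⟩, ht, by omega⟩
  · rintro ⟨⟨d, e⟩, t⟩ hy
    simp only [mem_sigma, Nat.mem_divisorsAntidiagonal, mem_Ioo] at hy
    obtain ⟨⟨rfl, hde⟩, ht, hte⟩ := hy
    simp only [mem_filter, mem_posSolutions]
    have hd := Nat.pos_of_mul_pos_right (Nat.pos_of_ne_zero hde)
    refine ⟨⟨hd, hd, ht, by omega, ?_⟩, trivial⟩
    rw [← add_mul, Nat.add_sub_cancel' hte.le, mul_comm]
  · rintro ⟨⟨i, j⟩, t, s⟩ hx
    simp only [mem_filter, mem_posSolutions] at hx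
    obtain ⟨-, rfl⟩ := hx
    simp
  · rintro ⟨⟨d, e⟩, t⟩ hy
    simp only [mem_sigma, mem_Ioo] at hy
    simp only [Sigma.mk.injEq, Prod.mk.injEq, heq_eq_eq, and_true, true_and]
    omega

end posSolutions

theorem sum_posSolutions_min_eq_sum_diag (m : ℕ) :
    ∑ x ∈ posSolutions m, (min x.2.1 x.2.2 : ℤ) =
      ∑ x ∈ posSolutions m with x.1.1 = x.1.2, (((x.2.1 + x.2.2 : ℕ) : ℤ) - x.1.1) := by
  set S := posSolutions m
  have euclid : ∑ x ∈ S with x.1.2 < x.1.1, ((x.2.1 + x.2.2 : ℕ) : ℤ) =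
      ∑ x ∈ S with x.2.1 < x.2.2, (x.2.2 : ℤ) :=
    sum_posSolutions_euclid m fun x => (x.2.2 : ℤ)
  have euclid_flip : ∑ x ∈ S with x.1.1 < x.1.2, ((x.2.1 + x.2.2 : ℕ) : ℤ) =
      ∑ x ∈ S with x.2.2 < x.2.1, (x.2.1 : ℤ) := by
    have h1 := sum_filter_posSolutions_flip m (fun x => x.1.2 < x.1.1)
      fun x => ((x.2.1 + x.2.2 : ℕ) : ℤ)
    have h2 := sum_filter_posSolutions_flip m (fun x => x.2.1 < x.2.2) fun x => (x.2.2 : ℤ)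
    simp only [Prod.fst_swap, Prod.snd_swap, add_comm (_ : ℕ)] at h1 h2
    rw [h1, euclid, ← h2]
  have diag_swap : ∑ x ∈ S with x.2.1 = x.2.2, (x.2.1 : ℤ) =
      ∑ x ∈ S with x.1.1 = x.1.2, (x.1.1 : ℤ) :=
    sum_filter_posSolutions_swap m (fun x => x.1.1 = x.1.2) fun x => (x.1.1 : ℤ)
  have split_ij : ∑ x ∈ S, ((x.2.1 + x.2.2 : ℕ) : ℤ) =
      ∑ x ∈ S with x.1.2 < x.1.1, ((x.2.1 + x.2.2 : ℕ) : ℤ) +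
      ∑ x ∈ S with x.1.1 < x.1.2, ((x.2.1 + x.2.2 : ℕ) : ℤ) +
      ∑ x ∈ S with x.1.1 = x.1.2, ((x.2.1 + x.2.2 : ℕ) : ℤ) := by
    simp only [sum_filter, ← sum_add_distrib]
    refine sum_congr rfl fun x _ => ?_
    split_ifs <;> omega
  have split_ts : ∑ x ∈ S, ((x.2.1 + x.2.2 : ℕ) : ℤ) =
      ∑ x ∈ S, (min x.2.1 x.2.2 : ℤ) + ∑ x ∈ S with x.2.1 < x.2.2, (x.2.2 : ℤ) +
      ∑ x ∈ S with x.2.2 < x.2.1, (x.2.1 : ℤ) + ∑ x ∈ S with x.2.1 = x.2.2, (x.2.1 : ℤ) := by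
    simp only [sum_filter, ← sum_add_distrib]
    refine sum_congr rfl fun x _ => ?_
    split_ifs <;> omega
  rw [sum_sub_distrib]
  linarith

theorem sum_posSolutions_min (m : ℕ) :
    ∑ x ∈ posSolutions m, (min x.2.1 x.2.2 : ℤ) =
      ∑ p ∈ m.divisorsAntidiagonal, ((p.2 : ℤ) ^ 2 - p.1 * p.2) := by
  have antidiag_swap :
      ∑ p ∈ m.divisorsAntidiagonal, (p.2 : ℤ) = ∑ p ∈ m.divisorsAntidiagonal, (p.1 : ℤ) :=
    sum_comp_of_involutive Prod.swap_swap (fun _ => Nat.swap_mem_divisorsAntidiagonal.mpr)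
      fun p => (p.1 : ℤ)
  have expand_weight : ∑ p ∈ m.divisorsAntidiagonal, (p.2 - 1) • ((p.2 : ℤ) - p.1) =
      ∑ p ∈ m.divisorsAntidiagonal, ((p.2 : ℤ) ^ 2 - p.1 * p.2) -
        (∑ p ∈ m.divisorsAntidiagonal, (p.2 : ℤ) - ∑ p ∈ m.divisorsAntidiagonal, (p.1 : ℤ)) := by
    rw [← sum_sub_distrib, ← sum_sub_distrib]
    refine sum_congr rfl fun p hp => ?_
    have hp2 := Nat.pos_of_ne_zero (Nat.right_ne_zero_of_mem_divisorsAntidiagonal hp)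
    rw [nsmul_eq_mul, Nat.cast_pred hp2]
    ring
  rw [sum_posSolutions_min_eq_sum_diag, sum_posSolutions_diag m fun d e => (e : ℤ) - d,
    expand_weight, antidiag_swap, sub_self, sub_zero]

theorem coeff_psum2_eq_sum_posSolutions (m : ℕ) :
    coeff m (psum2 fun i j => X ^ (i + j) * (1 - X ^ i)⁻¹ * (1 - X ^ j)⁻¹ * (1 - X ^ (i + j))⁻¹) =
      ∑ x ∈ posSolutions m, ((min x.2.1 x.2.2 : ℕ) : ℚ) := by
  rw [psum2, coeff_mk, posSolutions, sum_filter, sum_product (s := Icc 1 m ×ˢ Icc 1 m)]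
  refine sum_congr rfl fun p hp => ?_
  rw [mem_product, mem_Icc, mem_Icc] at hp
  exact coeff_X_pow_add_mul_inv_mul_inv_mul_inv (by omega) (by omega) m

theorem coeff_Z3_sub_psum (m : ℕ) :
    coeff m (Z3 - psum fun n => (n : ℚ) • (X ^ n * ((1 - X ^ n)⁻¹) ^ 2)) =
      ∑ p ∈ m.divisorsAntidiagonal, ((p.2 : ℚ) ^ 2 - p.1 * p.2) := by
  rw [map_sub, Z3, psum, psum, coeff_mk, coeff_mk, ← sum_sub_distrib,
    Nat.sum_divisorsAntidiagonal fun d e => (e : ℚ) ^ 2 - d * e, Nat.divisors,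
    Ico_add_one_right_eq_Icc, sum_filter]
  refine sum_congr rfl fun n hn => ?_
  have hn0 : n ≠ 0 := by rw [mem_Icc] at hn; omega
  rw [coeff_smul, coeff_X_pow_mul_one_add_X_pow_mul_inv_pow_three hn0, coeff_X_pow_mul_inv_sq hn0]
  split_ifs <;> ring

/-- `∑_{i,j>0} q^{i+j}/((1-qⁱ)(1-qʲ)(1-q^{i+j})) = Z(3) - ∑_{n>0} n·qⁿ/(1-qⁿ)²`. -/
theorem stmt5 :
    psum2 (fun i j => X ^ (i + j) * (1 - X ^ i)⁻¹ * (1 - X ^ j)⁻¹ * (1 - X ^ (i + j))⁻¹)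
      = Z3 - psum (fun n => (n : ℚ) • (X ^ n * ((1 - X ^ n)⁻¹) ^ 2)) := by
  ext m
  rw [coeff_psum2_eq_sum_posSolutions, coeff_Z3_sub_psum]
  exact_mod_cast sum_posSolutions_min m
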